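/- Let s : ℕ → ℕ and let C be a class of finite graphs. (a) If C is strongly limit quasi-wide with margin s, then C is quasi-wide with margin s. (b) If C is strongly uniformly limit quasi-wide with margin s, then C is uniformly quasi-wide with margin s. -/

import Mathlib

namespace NWD

open SimpleGraph Filter

/-! ### Shallow minors -/

/-- A `d`-shallow minor model of `H` in `G`: a family of pairwise disjoint branch sets,
each connected of radius at most `d` (witnessed by a center joined to every vertex of the
branch set by a walk of length at most `d` inside the branch set), such that every edge of `H`
is realized by an edge of `G` between the corresponding branch sets. -/
def IsShallowMinorModel {V W : Type} (G : SimpleGraph V) (H : SimpleGraph W) (d : ℕ)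
    (α : W → G.Subgraph) : Prop :=
  (∀ w : W, ∃ c : (α w).verts, ∀ x : (α w).verts, ∃ p : (α w).coe.Walk c x, p.length ≤ d) ∧
  (∀ w w' : W, w ≠ w' → Disjoint (α w).verts (α w').verts) ∧
  (∀ w w' : W, H.Adj w w' → ∃ x ∈ (α w).verts, ∃ y ∈ (α w').verts, G.Adj x y)

/-- `H` is a shallow minor of `G` at depth `d`. -/
def IsShallowMinor {V W : Type} (G : SimpleGraph V) (H : SimpleGraph W) (d : ℕ) : Prop :=
  ∃ α : W → G.Subgraph, IsShallowMinorModel G H d α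

/-! ### Topological shallow minors -/

/-- A `d`-shallow topological minor model of `H` in `G`: an injective map `f` on vertices
together with, for every edge `uv` of `H`, a path of length at most `2d+1` in `G` from `f u`
to `f v`; the paths are pairwise vertex-disjoint apart from possibly sharing endpoints. -/
def IsTopMinorModel {V W : Type} (G : SimpleGraph V) (H : SimpleGraph W) (d : ℕ)
    (f : W → V) (P : ∀ ⦃u v : W⦄, H.Adj u v → G.Walk (f u) (f v)) : Prop :=
  Function.Injective f ∧
  (∀ ⦃u v : W⦄ (h : H.Adj u v), (P h).IsPath) ∧
  (∀ ⦃u v : W⦄ (h : H.Adj u v), (P h).length ≤ 2 * d + 1) ∧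
  (∀ ⦃u v : W⦄ (h : H.Adj u v), P h.symm = (P h).reverse) ∧
  (∀ ⦃u v u' v' : W⦄ (h : H.Adj u v) (h' : H.Adj u' v'), s(u, v) ≠ s(u', v') →
    ∀ x : V, x ∈ (P h).support → x ∈ (P h').support →
      (x = f u ∨ x = f v) ∧ (x = f u' ∨ x = f v'))

/-- `H` is a topological shallow minor of `G` at depth `d`. -/
def IsTopShallowMinor {V W : Type} (G : SimpleGraph V) (H : SimpleGraph W) (d : ℕ) : Prop :=
  ∃ (f : W → V) (P : ∀ ⦃u v : W⦄, H.Adj u v → G.Walk (f u) (f v)),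
    IsTopMinorModel G H d f P

/-! ### Ultraproducts of graphs -/

/-- The setoid identifying sequences agreeing on a set of the ultrafilter. -/
def prodSetoid (U : Ultrafilter ℕ) (Vs : ℕ → Type) : Setoid (∀ n, Vs n) where
  r g h := ∀ᶠ n in (U : Filter ℕ), g n = h n
  iseqv := by
    constructor
    · intro g; exact Eventually.of_forall fun n => rfl
    · intro g h hg; exact hg.mono fun n hn => hn.symm
    · intro g h k h1 h2; filter_upwards [h1, h2] with n e1 e2; rw [e1, e2]

/-- The vertex set of the ultraproduct. -/
def UVertex (U : Ultrafilter ℕ) (Vs : ℕ → Type) : Type := Quotient (prodSetoid U Vs)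

/-- The ultraproduct of a sequence of graphs along the ultrafilter `U`. -/
def UGraph (U : Ultrafilter ℕ) {Vs : ℕ → Type} (Gs : ∀ n, SimpleGraph (Vs n)) :
    SimpleGraph (UVertex U Vs) where
  Adj x y := Quotient.liftOn₂ x y
    (fun g h => ∀ᶠ n in (U : Filter ℕ), (Gs n).Adj (g n) (h n))
    (by
      intro a b a' b' ha hb
      apply propext
      constructor
      · intro hadj; filter_upwards [hadj, ha, hb] with n h1 h2 h3; rw [← h2, ← h3]; exact h1
      · intro hadj; filter_upwards [hadj, ha, hb] with n h1 h2 h3; rw [h2, h3]; exact h1)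
  symm := by
    constructor
    intro x y
    refine Quotient.inductionOn₂ x y ?_
    intro g h hadj
    exact hadj.mono fun n hn => hn.symm
  loopless := by
    constructor
    intro x
    refine Quotient.inductionOn x ?_
    intro g hadj
    obtain ⟨n, hn⟩ := hadj.exists
    exact (Gs n).loopless.irrefl _ hn

/-! ### Graph classes and class limits -/

/-- A class of graphs: a predicate on graphs over arbitrary vertex types. -/
def GraphClass : Type 1 := ∀ V : Type, SimpleGraph V → Prop

/-- `C` is a class of finite graphs. -/
def FiniteClass (C : GraphClass) : Prop :=
  ∀ (V : Type) (G : SimpleGraph V), C V G → Finite V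

/-- `H` is (isomorphic to) a subgraph of `G`. -/
def IsSubgraphOf {W V : Type} (H : SimpleGraph W) (G : SimpleGraph V) : Prop :=
  ∃ f : W → V, Function.Injective f ∧ ∀ ⦃u v : W⦄, H.Adj u v → G.Adj (f u) (f v)

/-- Membership in the class limit `C*`: subgraphs of ultraproducts of sequences from `C`. -/
def InLimit (U : Ultrafilter ℕ) (C : GraphClass) {W : Type} (H : SimpleGraph W) : Prop :=
  ∃ (Vs : ℕ → Type) (Gs : ∀ n, SimpleGraph (Vs n)),
    (∀ n, C (Vs n) (Gs n)) ∧ IsSubgraphOf H (UGraph U Gs)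

/-- `H ∈ C ▽ d`. -/
def InClassMinor (C : GraphClass) (d : ℕ) {W : Type} (H : SimpleGraph W) : Prop :=
  ∃ (V : Type) (G : SimpleGraph V), C V G ∧ IsShallowMinor G H d

/-- `H ∈ C ∇̃ d`. -/
def InClassTopMinor (C : GraphClass) (d : ℕ) {W : Type} (H : SimpleGraph W) : Prop :=
  ∃ (V : Type) (G : SimpleGraph V), C V G ∧ IsTopShallowMinor G H d

/-- `H ∈ C* ▽ d`. -/
def InLimitMinor (U : Ultrafilter ℕ) (C : GraphClass) (d : ℕ) {W : Type}
    (H : SimpleGraph W) : Prop :=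
  ∃ (V : Type) (G : SimpleGraph V), InLimit U C G ∧ IsShallowMinor G H d

/-- `H ∈ C* ∇̃ d`. -/
def InLimitTopMinor (U : Ultrafilter ℕ) (C : GraphClass) (d : ℕ) {W : Type}
    (H : SimpleGraph W) : Prop :=
  ∃ (V : Type) (G : SimpleGraph V), InLimit U C G ∧ IsTopShallowMinor G H d

/-- `C` is somewhere dense: all finite graphs are shallow minors at some fixed depth. -/
def SomewhereDense (C : GraphClass) : Prop :=
  ∃ d : ℕ, ∀ (W : Type) (H : SimpleGraph W), Finite W → InClassMinor C d H

/-- `C` is topologically somewhere dense. -/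
def TopSomewhereDense (C : GraphClass) : Prop :=
  ∃ d : ℕ, ∀ (W : Type) (H : SimpleGraph W), Finite W → InClassTopMinor C d H

/-- The countably infinite clique `K_ω`. -/
def Komega : SimpleGraph ℕ := ⊤

/-- The clique on continuum many vertices `K_𝔠`. -/
def Kcontinuum : SimpleGraph (Set ℕ) := ⊤

/-- `C` is hereditary: closed under induced subgraphs. -/
def Hereditary (C : GraphClass) : Prop :=
  ∀ (V : Type) (G : SimpleGraph V), C V G →
    ∀ (W : Type) (f : W → V), Function.Injective f → C W (G.comap f)

/-! ### Scattered sets and quasi-wideness -/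

/-- `X` is a `d`-scattered set of `G - S`: it avoids `S`, and any two distinct vertices of `X`
are at distance greater than `2d` in `G - S` (every connecting walk avoiding `S` is longer
than `2d`). -/
def ScatteredIn {V : Type} (G : SimpleGraph V) (d : ℕ) (S X : Set V) : Prop :=
  Disjoint X S ∧ ∀ u ∈ X, ∀ v ∈ X, u ≠ v →
    ∀ p : G.Walk u v, (∀ x ∈ p.support, x ∉ S) → 2 * d < p.length

/-- `C` is quasi-wide with margin `s`. -/
def QuasiWide (C : GraphClass) (s : ℕ → ℕ) : Prop :=
  ∀ d m : ℕ, ∃ N : ℕ, ∀ (V : Type) (G : SimpleGraph V), C V G → N ≤ Nat.card V →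
    ∃ S X : Set V, S.Finite ∧ S.ncard ≤ s d ∧ X.Finite ∧ X.ncard = m ∧ ScatteredIn G d S X

/-- `C` is uniformly quasi-wide with margin `s`. -/
def UniformlyQuasiWide (C : GraphClass) (s : ℕ → ℕ) : Prop :=
  ∀ d m : ℕ, ∃ N : ℕ, ∀ (V : Type) (G : SimpleGraph V), C V G →
    ∀ W : Set V, N ≤ W.ncard →
      ∃ S X : Set V, S.Finite ∧ S.ncard ≤ s d ∧ X ⊆ W ∧ X.Finite ∧ X.ncard = m ∧
        ScatteredIn G d S X

/-- `C` is limit quasi-wide. -/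
def LimitQW (U : Ultrafilter ℕ) (C : GraphClass) : Prop :=
  ∀ (d : ℕ) (V : Type) (G : SimpleGraph V), InLimit U C G → Infinite V →
    ∃ S X : Set V, S.Finite ∧ X.Infinite ∧ ScatteredIn G d S X

/-- `C` is uniformly limit quasi-wide. -/
def UniformLimitQW (U : Ultrafilter ℕ) (C : GraphClass) : Prop :=
  ∀ (d : ℕ) (V : Type) (G : SimpleGraph V), InLimit U C G →
    ∀ W : Set V, W.Infinite →
      ∃ S X : Set V, S.Finite ∧ X ⊆ W ∧ X.Infinite ∧ ScatteredIn G d S X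

/-- `C` is strongly limit quasi-wide with margin `s`. -/
def StrongLimitQW (U : Ultrafilter ℕ) (C : GraphClass) (s : ℕ → ℕ) : Prop :=
  ∀ (d : ℕ) (V : Type) (G : SimpleGraph V), InLimit U C G → Infinite V →
    ∃ S X : Set V, S.Finite ∧ S.ncard ≤ s d ∧ X.Infinite ∧ ScatteredIn G d S X

/-- `C` is strongly uniformly limit quasi-wide with margin `s`. -/
def StrongUniformLimitQW (U : Ultrafilter ℕ) (C : GraphClass) (s : ℕ → ℕ) : Prop :=
  ∀ (d : ℕ) (V : Type) (G : SimpleGraph V), InLimit U C G →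
    ∀ W : Set V, W.Infinite →
      ∃ S X : Set V, S.Finite ∧ S.ncard ≤ s d ∧ X ⊆ W ∧ X.Infinite ∧ ScatteredIn G d S X

/-! ### The splitter game -/

/-- One round of the splitter game: from arena `A`, connector picks `v`, splitter picks `W`;
the new arena consists of the vertices of `A` outside `W` at distance at most `d` from `v`
in the subgraph induced by `A`. -/
def arenaStep {V : Type} (G : SimpleGraph V) (d : ℕ) (A : Set V) (v : V) (W : Set V) : Set V :=
  {x | x ∈ A ∧ x ∉ W ∧ ∃ p : G.Walk v x, p.length ≤ d ∧ ∀ y ∈ p.support, y ∈ A}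

/-- The arena after a (chronological) history of moves. -/
def arenaAfter {V : Type} (G : SimpleGraph V) (d : ℕ) (hist : List (V × Set V)) : Set V :=
  hist.foldl (fun A mv => arenaStep G d A mv.1 mv.2) Set.univ

/-- A strategy for splitter: given the history and connector's new move, produce a set. -/
def SplitterStrategy (V : Type) : Type := List (V × Set V) → V → Set V

/-- The history of the play where connector plays `c` and splitter follows `σ`. -/
def splitterHist {V : Type} (σ : SplitterStrategy V) (c : ℕ → V) : ℕ → List (V × Set V)
  | 0 => []
  | n + 1 => splitterHist σ c n ++ [(c n, σ (splitterHist σ c n) (c n))]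

/-- Connector's first `n` moves are valid (inside the successive arenas). -/
def ConsistentPlay {V : Type} (G : SimpleGraph V) (d : ℕ) (σ : SplitterStrategy V)
    (c : ℕ → V) (n : ℕ) : Prop :=
  ∀ k < n, c k ∈ arenaAfter G d (splitterHist σ c k)

/-- `σ` is a winning strategy for splitter in the limit `d`-splitter game on `G`:
its moves are valid (finite subsets of the arena) along any consistent play, and no
infinite sequence of valid connector moves exists. -/
def SplitterWinsLimit {V : Type} (G : SimpleGraph V) (d : ℕ) (σ : SplitterStrategy V) : Prop :=
  (∀ (c : ℕ → V) (n : ℕ), ConsistentPlay G d σ c (n + 1) →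
      (σ (splitterHist σ c n) (c n)).Finite ∧
      σ (splitterHist σ c n) (c n) ⊆ arenaAfter G d (splitterHist σ c n)) ∧
  (∀ c : ℕ → V, ∃ n : ℕ, c n ∉ arenaAfter G d (splitterHist σ c n))

/-- `σ` is a winning strategy for splitter in the `(ℓ, m, d)`-splitter game on `G`. -/
def SplitterWinsGame {V : Type} (G : SimpleGraph V) (l m d : ℕ) (σ : SplitterStrategy V) :
    Prop :=
  (∀ (c : ℕ → V) (n : ℕ), ConsistentPlay G d σ c (n + 1) →
      (σ (splitterHist σ c n) (c n)).Finite ∧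
      (σ (splitterHist σ c n) (c n)).ncard ≤ m ∧
      σ (splitterHist σ c n) (c n) ⊆ arenaAfter G d (splitterHist σ c n)) ∧
  (∀ c : ℕ → V, ∃ n ≤ l, c n ∉ arenaAfter G d (splitterHist σ c n))

/-- A strategy for connector: given the history, produce a vertex. -/
def ConnectorStrategy (V : Type) : Type := List (V × Set V) → V

/-- The history of the play where connector follows `τ` and splitter plays `w`. -/
def connectorHist {V : Type} (τ : ConnectorStrategy V) (w : ℕ → Set V) :
    ℕ → List (V × Set V)
  | 0 => []
  | n + 1 => connectorHist τ w n ++ [(τ (connectorHist τ w n), w n)]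

/-- `τ` is a winning strategy for connector in the limit `d`-splitter game on `G`:
as long as splitter's moves are valid, connector's moves stay in the arena forever. -/
def ConnectorWinsLimit {V : Type} (G : SimpleGraph V) (d : ℕ) (τ : ConnectorStrategy V) :
    Prop :=
  ∀ (w : ℕ → Set V) (n : ℕ),
    (∀ k < n, (w k).Finite ∧ w k ⊆ arenaAfter G d (connectorHist τ w k)) →
    τ (connectorHist τ w n) ∈ arenaAfter G d (connectorHist τ w n)

/-- `τ` is a winning strategy for connector in the `(ℓ, m, d)`-splitter game on `G`:
the arena stays nonempty for `ℓ` rounds, i.e. connector has valid moves at rounds `0,…,ℓ`. -/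
def ConnectorWinsGame {V : Type} (G : SimpleGraph V) (l m d : ℕ) (τ : ConnectorStrategy V) :
    Prop :=
  ∀ (w : ℕ → Set V) (n : ℕ), n ≤ l →
    (∀ k < n, (w k).Finite ∧ (w k).ncard ≤ m ∧
      w k ⊆ arenaAfter G d (connectorHist τ w k)) →
    τ (connectorHist τ w n) ∈ arenaAfter G d (connectorHist τ w n)

/-- `C` is winning for splitter. -/
def WinningForSplitter (C : GraphClass) : Prop :=
  ∀ d : ℕ, ∃ l m : ℕ, ∀ (V : Type) (G : SimpleGraph V), C V G →
    ∃ σ : SplitterStrategy V, SplitterWinsGame G l m d σ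

/-- `C` is limit winning for splitter. -/
def LimitWinningForSplitter (U : Ultrafilter ℕ) (C : GraphClass) : Prop :=
  ∀ (d : ℕ) (V : Type) (G : SimpleGraph V), InLimit U C G →
    ∃ σ : SplitterStrategy V, SplitterWinsLimit G d σ

/-! ### First-order satisfaction in graphs -/

/-- `G` satisfies the first-order sentence `φ` in the language of graphs. -/
def GSat {V : Type} (G : SimpleGraph V) (φ : FirstOrder.Language.graph.Sentence) : Prop :=
  @FirstOrder.Language.Sentence.Realize FirstOrder.Language.graph V G.structure φ

/-!
Suppose, say, uniform quasi-wideness fails for some `d` and `m`. Then for every `n` there is a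
counterexample `Gₙ ∈ C` with a set `Wₙ` of more than `n` vertices. Along the non-principal
ultrafilter the internal set `∏_U Wₙ` of the ultraproduct `G = ∏_U Gₙ ∈ C*` is infinite, so the
limit hypothesis yields `S` with `|S| ≤ s d` and an infinite `d`-scattered set `X ⊆ ∏_U Wₙ` of
`G - S`. Take `m` points of `X`. Distinctness, membership in `S` and `Wₙ`, and the existence of a
short walk avoiding `S` between two of them are all decided coordinatewise on a set in `U`
(a bounded walk in `Gₙ` for `U`-many `n` glues to a walk in `G`), so for `U`-many `n` the
coordinates of `S` and of these points witness quasi-wideness in `Gₙ`, a contradiction.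
-/

theorem SimpleGraph.exists_walk_of_adj_succ {V : Type*} {G : SimpleGraph V} (z : ℕ → V) (l : ℕ)
    (h : ∀ t < l, G.Adj (z t) (z (t + 1))) :
    ∃ p : G.Walk (z 0) (z l), p.length = l ∧ ∀ x ∈ p.support, ∃ t ≤ l, z t = x := by
  induction l with
  | zero => exact ⟨.nil, rfl, fun x hx => ⟨0, le_rfl, (List.mem_singleton.1 hx).symm⟩⟩
  | succ l ih =>
    obtain ⟨p, hlen, hsupp⟩ := ih fun t ht => h t (by omega)
    refine ⟨p.concat (h l (by omega)), by simp [hlen], fun x hx => ?_⟩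
    rcases List.mem_append.1 (Walk.support_concat p _ ▸ hx) with hx | hx
    · obtain ⟨t, ht, rfl⟩ := hsupp x hx
      exact ⟨t, by omega, rfl⟩
    · exact ⟨l + 1, le_rfl, (List.mem_singleton.1 hx).symm⟩

theorem le_atTop_of_singleton_notMem {U : Ultrafilter ℕ} (hU : ∀ a : ℕ, {a} ∉ U) :
    (U : Filter ℕ) ≤ atTop := by
  rcases U.le_cofinite_or_eq_pure with h | ⟨a, rfl⟩
  · exact Nat.cofinite_eq_atTop ▸ h
  · exact absurd (Set.mem_singleton a) (hU a)

variable {U : Ultrafilter ℕ} {Vs : ℕ → Type}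

def UVertex.mk (U : Ultrafilter ℕ) (g : ∀ n, Vs n) : UVertex U Vs :=
  Quotient.mk (prodSetoid U Vs) g

noncomputable def UVertex.out (z : UVertex U Vs) : ∀ n, Vs n :=
  Quotient.out z

namespace UVertex

theorem mk_out (z : UVertex U Vs) : mk U z.out = z :=
  Quotient.out_eq z

theorem mk_eq_mk {g h : ∀ n, Vs n} : mk U g = mk U h ↔ ∀ᶠ n in (U : Filter ℕ), g n = h n :=
  Quotient.eq

theorem out_mk (g : ∀ n, Vs n) : ∀ᶠ n in (U : Filter ℕ), (mk U g).out n = g n :=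
  mk_eq_mk.1 (mk_out (mk U g))

theorem eq_iff_eventually {z w : UVertex U Vs} :
    z = w ↔ ∀ᶠ n in (U : Filter ℕ), z.out n = w.out n := by
  rw [← mk_eq_mk, mk_out, mk_out]

end UVertex

open UVertex

theorem UGraph_adj_mk {Gs : ∀ n, SimpleGraph (Vs n)} {g h : ∀ n, Vs n} :
    (UGraph U Gs).Adj (mk U g) (mk U h) ↔ ∀ᶠ n in (U : Filter ℕ), (Gs n).Adj (g n) (h n) :=
  Iff.rfl

theorem inLimit_UGraph {C : GraphClass} {Gs : ∀ n, SimpleGraph (Vs n)} (hC : ∀ n, C (Vs n) (Gs n)) :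
    InLimit U C (UGraph U Gs) :=
  ⟨Vs, Gs, hC, id, Function.injective_id, fun _ _ h => h⟩

/-- The internal set `∏_U Tₙ` of the ultraproduct. -/
def internalSet (U : Ultrafilter ℕ) (T : ∀ n, Set (Vs n)) : Set (UVertex U Vs) :=
  {z | ∀ᶠ n in (U : Filter ℕ), z.out n ∈ T n}

theorem mk_mem_internalSet {T : ∀ n, Set (Vs n)} {g : ∀ n, Vs n} :
    mk U g ∈ internalSet U T ↔ ∀ᶠ n in (U : Filter ℕ), g n ∈ T n :=
  Filter.eventually_congr ((out_mk g).mono fun n hn => by rw [hn])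

@[simp]
theorem internalSet_univ : internalSet U (fun n => (Set.univ : Set (Vs n))) = Set.univ :=
  Set.eq_univ_of_forall fun _ => .of_forall fun _ => trivial

theorem internalSet_image_out {S : Set (UVertex U Vs)} (hS : S.Finite) :
    internalSet U (fun n => (·.out n) '' S) = S := by
  ext z
  simp only [internalSet, Set.mem_ofPred_eq, Set.mem_image,
    Ultrafilter.eventually_exists_mem_iff hS, ← eq_iff_eventually, exists_eq_right]

theorem internalSet_infinite [∀ n, Nonempty (Vs n)] {T : ∀ n, Set (Vs n)}
    (hT : Tendsto (fun n => (T n).ncard) (U : Filter ℕ) atTop) :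
    (internalSet U T).Infinite := by
  intro hfin
  have hnew : ∀ᶠ n in (U : Filter ℕ), ∃ x, x ∈ T n ∧ x ∉ (·.out n) '' internalSet U T := by
    filter_upwards [hT.eventually_gt_atTop (internalSet U T).ncard] with n hn
    have hlt := (Set.ncard_image_le hfin (f := (·.out n))).trans_lt hn
    exact Set.sdiff_nonempty.2 fun hsub => (Set.ncard_le_ncard hsub (hfin.image _)).not_gt hlt
  obtain ⟨g, hg⟩ := Filter.skolem.1 hnew
  have hmem : mk U g ∈ internalSet U T := mk_mem_internalSet.2 (hg.mono fun n hn => hn.1)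
  obtain ⟨n, hn, hout⟩ := (hg.and (out_mk g)).exists
  exact hn.2 ⟨mk U g, hmem, hout⟩

theorem eventually_injOn_out {X : Set (UVertex U Vs)} (hX : X.Finite) :
    ∀ᶠ n in (U : Filter ℕ), Set.InjOn (·.out n) X := by
  refine (eventually_all_finite hX).2 fun x _ => (eventually_all_finite hX).2 fun y _ => ?_
  by_cases hxy : x = y
  · exact .of_forall fun _ _ => hxy
  · exact (Ultrafilter.eventually_not.2 (mt eq_iff_eventually.2 hxy)).mono fun _ hn h => absurd h hn

theorem exists_walk_of_eventually_walk {Gs : ∀ n, SimpleGraph (Vs n)} {T : ∀ n, Set (Vs n)}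
    {a b : ∀ n, Vs n} {l : ℕ}
    (h : ∀ᶠ n in (U : Filter ℕ), ∃ p : (Gs n).Walk (a n) (b n),
      p.length = l ∧ ∀ x ∈ p.support, x ∉ T n) :
    ∃ q : (UGraph U Gs).Walk (mk U a) (mk U b), q.length = l ∧
      ∀ z ∈ q.support, z ∉ internalSet U T := by
  have : ∀ n, Nonempty (Vs n) := fun n => ⟨a n⟩
  -- The walks live in different types, so choose them through their vertex sequences.
  obtain ⟨Y, hY⟩ := Filter.skolem.1 <| h.mono fun n ⟨p, hp⟩ =>
    (⟨p.getVert, p, hp, rfl⟩ : ∃ Y : ℕ → Vs n, ∃ p : (Gs n).Walk (a n) (b n),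
      (p.length = l ∧ ∀ x ∈ p.support, x ∉ T n) ∧ Y = p.getVert)
  set z : ℕ → UVertex U Vs := fun t => mk U fun n => Y n t
  have hadj : ∀ t < l, (UGraph U Gs).Adj (z t) (z (t + 1)) := fun t ht =>
    UGraph_adj_mk.2 <| hY.mono fun n ⟨p, ⟨hlen, _⟩, hYp⟩ => hYp ▸ p.adj_getVert_succ (hlen ▸ ht)
  have hstart : z 0 = mk U a :=
    mk_eq_mk.2 <| hY.mono fun n ⟨p, _, hYp⟩ => hYp ▸ p.getVert_zero
  have hend : z l = mk U b :=
    mk_eq_mk.2 <| hY.mono fun n ⟨p, ⟨hlen, _⟩, hYp⟩ => hYp ▸ hlen ▸ p.getVert_length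
  obtain ⟨q, hlen, hsupp⟩ := SimpleGraph.exists_walk_of_adj_succ z l hadj
  refine ⟨q.copy hstart hend, by rw [Walk.length_copy, hlen], fun w hw hwT => ?_⟩
  obtain ⟨t, ht, rfl⟩ := hsupp w (by rwa [Walk.support_copy] at hw)
  obtain ⟨n, ⟨p, ⟨hlen, havoid⟩, hYp⟩, hT⟩ := (hY.and (mk_mem_internalSet.1 hwT)).exists
  exact havoid _ (p.mem_support_iff_exists_getVert.2 ⟨t, hYp ▸ rfl, hlen ▸ ht⟩) hT

theorem ScatteredIn.mono {V : Type} {G : SimpleGraph V} {d : ℕ} {S X Y : Set V}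
    (h : ScatteredIn G d S X) (hYX : Y ⊆ X) : ScatteredIn G d S Y :=
  ⟨h.1.mono_left hYX, fun u hu v hv => h.2 u (hYX hu) v (hYX hv)⟩

theorem ScatteredIn.eventually_image_out {Gs : ∀ n, SimpleGraph (Vs n)} {d : ℕ}
    {S X : Set (UVertex U Vs)} (hS : S.Finite) (hX : X.Finite)
    (h : ScatteredIn (UGraph U Gs) d S X) :
    ∀ᶠ n in (U : Filter ℕ), ScatteredIn (Gs n) d ((·.out n) '' S) ((·.out n) '' X) := by
  have hdisj : ∀ᶠ n in (U : Filter ℕ), Disjoint ((·.out n) '' X) ((·.out n) '' S) := by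
    have hout : ∀ x ∈ X, ∀ᶠ n in (U : Filter ℕ), x.out n ∉ (·.out n) '' S := fun x hx =>
      Ultrafilter.eventually_not.2 fun hxS =>
        h.1.notMem_of_mem_left hx (internalSet_image_out hS ▸ hxS)
    exact ((eventually_all_finite hX).2 hout).mono fun n hn =>
      Set.disjoint_left.2 fun _ ⟨x, hx, hxn⟩ => hxn ▸ hn x hx
  refine hdisj.and ?_
  by_contra hshort
  rw [← Ultrafilter.eventually_not] at hshort
  have hwalk : ∀ᶠ n in (U : Filter ℕ), ∃ x ∈ X, ∃ y ∈ X, ∃ l ∈ Set.Iic (2 * d),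
      x.out n ≠ y.out n ∧ ∃ p : (Gs n).Walk (x.out n) (y.out n),
        p.length = l ∧ ∀ v ∈ p.support, v ∉ (·.out n) '' S := by
    refine hshort.mono fun n hn => ?_
    push Not at hn
    obtain ⟨_, ⟨x, hx, rfl⟩, _, ⟨y, hy, rfl⟩, hne, p, havoid, hlen⟩ := hn
    exact ⟨x, hx, y, hy, p.length, hlen, hne, p, rfl, havoid⟩
  simp only [Ultrafilter.eventually_exists_mem_iff hX,
    Ultrafilter.eventually_exists_mem_iff (Set.finite_Iic (2 * d))] at hwalk
  obtain ⟨x, hx, y, hy, l, hl, hxy⟩ := hwalk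
  obtain ⟨q, hlen, havoid⟩ := exists_walk_of_eventually_walk (hxy.mono fun _ hn => hn.2)
  rw [internalSet_image_out hS] at havoid
  have hne : x ≠ y := by
    rintro rfl
    obtain ⟨n, hn⟩ := hxy.exists
    exact hn.1 rfl
  have hlong := h.2 x hx y hy hne (q.copy (mk_out x) (mk_out y)) (by simpa using havoid)
  rw [Walk.length_copy, hlen] at hlong
  exact hl.not_gt hlong

theorem eventually_exists_scattered {Gs : ∀ n, SimpleGraph (Vs n)} {W : ∀ n, Set (Vs n)}
    {d k : ℕ} {S X : Set (UVertex U Vs)} (hS : S.Finite) (hSk : S.ncard ≤ k)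
    (hXW : X ⊆ internalSet U W) (hX : X.Infinite) (h : ScatteredIn (UGraph U Gs) d S X)
    (m : ℕ) :
    ∀ᶠ n in (U : Filter ℕ), ∃ S' X' : Set (Vs n), S'.Finite ∧ S'.ncard ≤ k ∧ X' ⊆ W n ∧
      X'.Finite ∧ X'.ncard = m ∧ ScatteredIn (Gs n) d S' X' := by
  obtain ⟨Y, hYX, hY, hYm⟩ := hX.exists_subset_ncard_eq m
  filter_upwards [(h.mono hYX).eventually_image_out hS hY, eventually_injOn_out hY,
    (eventually_all_finite hY).2 fun y hy => hXW (hYX hy)] with n hscat hinj hYW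
  exact ⟨_, _, hS.image _, (Set.ncard_image_le hS).trans hSk, Set.image_subset_iff.2 hYW,
    hY.image _, hinj.ncard_image.trans hYm, hscat⟩

theorem internalSet_infinite_of_lt_ncard (hU : ∀ a : ℕ, {a} ∉ U) {W : ∀ n, Set (Vs n)}
    (hW : ∀ n, n < (W n).ncard) : (internalSet U W).Infinite := by
  have : ∀ n, Nonempty (Vs n) := fun n => ⟨(Set.nonempty_of_ncard_ne_zero (hW n).ne_bot).some⟩
  exact internalSet_infinite <| tendsto_atTop_mono (fun n => (hW n).le)
    (tendsto_id.mono_left (le_atTop_of_singleton_notMem hU))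

theorem quasi_los_general (U : Ultrafilter ℕ) (hU : ∀ a : ℕ, {a} ∉ U)
    (C : GraphClass) (s : ℕ → ℕ) :
    (StrongLimitQW U C s → QuasiWide C s) ∧
    (StrongUniformLimitQW U C s → UniformlyQuasiWide C s) := by
  constructor
  · intro hlim d m
    by_contra! hbad
    choose V G hC hcard hno using fun n => hbad (n + 1)
    have hinf := internalSet_infinite_of_lt_ncard hU (W := fun n => Set.univ)
      fun n => (Set.ncard_univ (V n)).symm ▸ hcard n
    rw [internalSet_univ, Set.infinite_univ_iff] at hinf
    obtain ⟨S, X, hS, hSk, hX, hscat⟩ := hlim d _ _ (inLimit_UGraph hC) hinf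
    obtain ⟨n, S', X', hS', hS'k, -, hX', hX'm, hscat'⟩ :=
      (eventually_exists_scattered hS hSk (internalSet_univ ▸ Set.subset_univ X) hX hscat m).exists
    exact hno n S' X' hS' hS'k hX' hX'm hscat'
  · intro hlim d m
    by_contra! hbad
    choose V G hC W hW hno using fun n => hbad (n + 1)
    obtain ⟨S, X, hS, hSk, hXW, hX, hscat⟩ :=
      hlim d _ _ (inLimit_UGraph hC) _ (internalSet_infinite_of_lt_ncard hU hW)
    obtain ⟨n, S', X', hS', hS'k, hX'W, hX', hX'm, hscat'⟩ :=
      (eventually_exists_scattered hS hSk hXW hX hscat m).exists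
    exact hno n S' X' hS' hS'k hX'W hX' hX'm hscat'

/-- (a) If `C` is strongly limit quasi-wide with margin `s`, then `C` is
quasi-wide with margin `s`. (b) If `C` is strongly uniformly limit quasi-wide with margin
`s`, then `C` is uniformly quasi-wide with margin `s`. -/
theorem quasi_los (U : Ultrafilter ℕ) (hU : ∀ a : ℕ, {a} ∉ U)
    (C : GraphClass) (hfin : FiniteClass C) (s : ℕ → ℕ) :
    (StrongLimitQW U C s → QuasiWide C s) ∧
    (StrongUniformLimitQW U C s → UniformlyQuasiWide C s) :=
  quasi_los_general U hU C s

end NWD
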